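/- arXiv:2010.08368 — 2 statements merged into one kernel-verified Lean document; each statement's English description precedes it below -/
import Mathlib

section
/- For every odd positive integer k, there does not exist a total k-uniform graph; that is, no finite simple graph G without isolated vertices satisfies γ_t(G) = γ_gr^t(G) = k with k odd. -/
/-!
In a total `k`-uniform graph every total dominating sequence has length `k`, and every legal
sequence extends to a total dominating one. Fix an edge `ab` and let `R` be the set of vertices
adjacent to neither `a` nor `b`. If some `r ∈ R` has all its neighbors in `N(a) ∪ N(b)`, then `r`
can be put in front of a total dominating sequence starting with `a, b`, giving a longer one.
Otherwise `G[R]` has no isolated vertices, and `a, b` followed by a total dominating sequence of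
`G[R]` is a total dominating sequence of `G`; hence all total dominating sequences of `G[R]` have
length `k - 2`, and induction on `k` shows that `k` is even, the base case being the empty graph.
-/

open SimpleGraph

/-- `A ⊆ V(G)` is a total dominating set of `G`: every vertex has a neighbor in `A`. -/
def TotalDomSet {V : Type*} (G : SimpleGraph V) (A : Set V) : Prop :=
  ∀ v : V, ∃ a ∈ A, G.Adj v a

/-- `s` is a legal (open neighborhood) sequence of `G`: the vertices are distinct and every
vertex after the first has a neighbor adjacent to no vertex preceding it in the sequence. -/
def LegalSeq {V : Type*} (G : SimpleGraph V) (s : List V) : Prop :=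
  s.Nodup ∧ ∀ (i : ℕ) (h : i < s.length), 0 < i →
    ∃ w : V, G.Adj (s.get ⟨i, h⟩) w ∧ ∀ u ∈ s.take i, ¬ G.Adj u w

/-- `s` is a total dominating sequence of `G`: a legal sequence whose underlying set is a
total dominating set. -/
def TotalDomSeq {V : Type*} (G : SimpleGraph V) (s : List V) : Prop :=
  LegalSeq G s ∧ TotalDomSet G {v | v ∈ s}

/-- The total domination number `γ_t(G)`: the minimum size of a total dominating set. -/
noncomputable def totalDomNum {V : Type*} (G : SimpleGraph V) : ℕ :=
  sInf {n | ∃ A : Set V, TotalDomSet G A ∧ A.ncard = n}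

/-- The Grundy total domination number `γ_gr^t(G)`: the maximum length of a total dominating
sequence. -/
noncomputable def grundyTotalDomNum {V : Type*} (G : SimpleGraph V) : ℕ :=
  sSup {n | ∃ s : List V, TotalDomSeq G s ∧ s.length = n}

/-- `G` is total `k`-uniform if `γ_t(G) = γ_gr^t(G) = k`. -/
def TotalKUniform {V : Type*} (G : SimpleGraph V) (k : ℕ) : Prop :=
  totalDomNum G = k ∧ grundyTotalDomNum G = k

/-- `G` has no isolated vertices. -/
def NoIsolatedVerts {V : Type*} (G : SimpleGraph V) : Prop :=
  ∀ v : V, ∃ w : V, G.Adj v w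

/-- The closed neighborhood `N[v] = N(v) ∪ {v}`. -/
def closedNbhd {V : Type*} (G : SimpleGraph V) (v : V) : Set V :=
  insert v (G.neighborSet v)

/-- `G` is false twin-free: no two distinct vertices have the same (open) neighborhood. -/
def FalseTwinFree {V : Type*} (G : SimpleGraph V) : Prop :=
  ∀ u v : V, u ≠ v → G.neighborSet u ≠ G.neighborSet v

theorem List.Nodup.ncard_setOf_mem {α : Type*} {s : List α} (hs : s.Nodup) :
    {v | v ∈ s}.ncard = s.length := by
  classical
  rw [show {v | v ∈ s} = (s.toFinset : Set α) by ext; simp, Set.ncard_coe_finset,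
    List.toFinset_card_of_nodup hs]

section

variable {V : Type*} {G : SimpleGraph V}

theorem legalSeq_iff {s : List V} :
    LegalSeq G s ↔ s.Nodup ∧ ∀ (i : ℕ) (h : i < s.length), 0 < i →
      ∃ w, G.Adj s[i] w ∧ ∀ u ∈ s.take i, ¬ G.Adj u w :=
  Iff.rfl

theorem legalSeq_singleton (a : V) : LegalSeq G [a] :=
  ⟨List.nodup_singleton a, fun i h hi => by simp at h; omega⟩

theorem legalSeq_append_iff {p q : List V} (hp : p ≠ []) :
    LegalSeq G (p ++ q) ↔ LegalSeq G p ∧ (p ++ q).Nodup ∧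
      ∀ (i : ℕ) (h : i < q.length), ∃ w, G.Adj q[i] w ∧ ∀ u ∈ p ++ q.take i, ¬ G.Adj u w := by
  have hp0 : 0 < p.length := List.length_pos_iff.mpr hp
  simp only [legalSeq_iff]
  constructor
  · rintro ⟨hnd, hw⟩
    refine ⟨⟨hnd.of_append_left, fun i h hi => ?_⟩, hnd, fun i h => ?_⟩
    · obtain ⟨w, hiw, hw⟩ := hw i (by simp; omega) hi
      rw [List.getElem_append_left h] at hiw
      exact ⟨w, hiw, by simpa [List.take_append_of_le_length h.le] using hw⟩
    · obtain ⟨w, hiw, hw⟩ := hw (p.length + i) (by simp; omega) (by omega)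
      rw [List.getElem_append_right (by omega)] at hiw
      exact ⟨w, by simpa using hiw, by simpa [List.take_length_add_append] using hw⟩
  · rintro ⟨⟨-, hwp⟩, hnd, hwq⟩
    refine ⟨hnd, fun i h hi => ?_⟩
    rcases lt_or_ge i p.length with hip | hip
    · obtain ⟨w, hiw, hw⟩ := hwp i hip hi
      rw [List.getElem_append_left hip]
      exact ⟨w, hiw, by simpa [List.take_append_of_le_length hip.le] using hw⟩
    · obtain ⟨j, rfl⟩ := Nat.exists_eq_add_of_le hip
      obtain ⟨w, hjw, hw⟩ := hwq j (by simp at h; omega)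
      rw [List.getElem_append_right hip]
      exact ⟨w, by simpa using hjw, by simpa [List.take_length_add_append] using hw⟩

theorem LegalSeq.append_singleton {s : List V} {x w : V} (hs : LegalSeq G s) (hx : x ∉ s)
    (hxw : G.Adj x w) (hw : ∀ u ∈ s, ¬ G.Adj u w) : LegalSeq G (s ++ [x]) := by
  rcases eq_or_ne s [] with rfl | hne
  · exact legalSeq_singleton x
  refine (legalSeq_append_iff hne).mpr ⟨hs, ?_, fun i h => ?_⟩
  · simp only [List.nodup_append, hs.1, List.nodup_singleton, List.mem_singleton, true_and]
    rintro a ha _ rfl rfl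
    exact hx ha
  · obtain rfl : i = 0 := by simpa using h
    exact ⟨w, hxw, by simpa using hw⟩

theorem legalSeq_pair {a b : V} (hab : G.Adj a b) : LegalSeq G [a, b] :=
  (legalSeq_singleton a).append_singleton (by simpa using hab.ne') hab.symm (by simp)

theorem legalSeq_cons_pair {r a b : V} (hab : G.Adj a b) (hra : ¬ G.Adj a r)
    (hrb : ¬ G.Adj b r) : LegalSeq G [r, a, b] := by
  have hra' : r ≠ a := fun h => hrb (h ▸ hab.symm)
  have hrb' : r ≠ b := fun h => hra (h ▸ hab)
  exact ((legalSeq_singleton r).append_singleton (w := b) (by simpa using hra'.symm) hab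
    (by simp [G.adj_comm r, hrb])).append_singleton (w := a) (by simp [hab.ne', hrb'.symm])
    hab.symm (by simp [G.adj_comm r, hra])

theorem TotalDomSet.mono {A B : Set V} (hA : TotalDomSet G A) (hAB : A ⊆ B) :
    TotalDomSet G B :=
  fun v => (hA v).imp fun _ ⟨ha, hva⟩ => ⟨hAB ha, hva⟩

theorem totalDomSeq_nil [IsEmpty V] : TotalDomSeq G [] :=
  ⟨⟨List.nodup_nil, fun _ h => absurd h (Nat.not_lt_zero _)⟩, isEmptyElim⟩

theorem TotalDomSeq.exists_adj_forall_not_adj {s : List V} (hs : TotalDomSeq G s) (i : ℕ)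
    (h : i < s.length) : ∃ w, G.Adj s[i] w ∧ ∀ u ∈ s.take i, ¬ G.Adj u w := by
  rcases Nat.eq_zero_or_pos i with rfl | hi
  · obtain ⟨w, -, hw⟩ := hs.2 s[0]
    exact ⟨w, hw, by simp⟩
  · exact hs.1.2 i h hi

theorem LegalSeq.exists_totalDomSeq_append [Finite V] (hiso : NoIsolatedVerts G) {s : List V}
    (hs : LegalSeq G s) : ∃ t, TotalDomSeq G (s ++ t) := by
  by_cases hdom : TotalDomSet G {v | v ∈ s}
  · exact ⟨[], by simpa using ⟨hs, hdom⟩⟩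
  simp only [TotalDomSet, not_forall, not_exists, not_and] at hdom
  obtain ⟨v, hv⟩ := hdom
  obtain ⟨w, hvw⟩ := hiso v
  have hsw : LegalSeq G (s ++ [w]) :=
    hs.append_singleton (fun hw => hv w hw hvw) hvw.symm fun u hu huv => hv u hu huv.symm
  obtain ⟨t, ht⟩ := LegalSeq.exists_totalDomSeq_append hiso hsw
  exact ⟨w :: t, by simpa using ht⟩
termination_by Nat.card V - s.length
decreasing_by
  have := hsw.1.length_le_natCard
  simp only [List.length_append, List.length_singleton] at this ⊢
  omega

theorem LegalSeq.cons_append_of_forall_adj {p q : List V} {r : V} (hp : p ≠ [])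
    (hpq : LegalSeq G (p ++ q)) (hrp : LegalSeq G (r :: p))
    (hr : ∀ w, G.Adj r w → ∃ u ∈ p, G.Adj u w) : LegalSeq G (r :: p ++ q) := by
  obtain ⟨-, hnd, hwq⟩ := (legalSeq_append_iff hp).mp hpq
  have hwq' : ∀ (i : ℕ) (h : i < q.length),
      ∃ w, G.Adj q[i] w ∧ ∀ u ∈ r :: p ++ q.take i, ¬ G.Adj u w := by
    intro i h
    obtain ⟨w, hiw, hw⟩ := hwq i h
    refine ⟨w, hiw, fun u hu huw => ?_⟩
    rcases List.mem_cons.mp hu with rfl | hu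
    · obtain ⟨v, hv, hvw⟩ := hr w huw
      exact hw v (List.mem_append_left _ hv) hvw
    · exact hw u hu huw
  have hrq : r ∉ q := fun hrq => by
    obtain ⟨i, h, rfl⟩ := List.getElem_of_mem hrq
    obtain ⟨w, hiw, hw⟩ := hwq' i h
    exact hw _ List.mem_cons_self hiw
  refine (legalSeq_append_iff (List.cons_ne_nil r p)).mpr ⟨hrp, ?_, hwq'⟩
  simpa [hnd, hrq] using (List.nodup_cons.mp hrp.1).1

theorem TotalDomSeq.cons_cons_map_induce {a b : V} (hab : G.Adj a b)
    {s : List {v | ¬ G.Adj a v ∧ ¬ G.Adj b v}}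
    (hs : TotalDomSeq (G.induce {v | ¬ G.Adj a v ∧ ¬ G.Adj b v}) s) :
    TotalDomSeq G (a :: b :: s.map Subtype.val) := by
  have hmem : ∀ v ∈ s.map Subtype.val, ¬ G.Adj a v ∧ ¬ G.Adj b v := by
    simp only [List.mem_map]
    rintro _ ⟨v, -, rfl⟩
    exact v.2
  refine ⟨(legalSeq_append_iff (p := [a, b]) (by simp)).mpr
    ⟨legalSeq_pair hab, ?_, fun i h => ?_⟩, fun v => ?_⟩
  · have ha : a ∉ s.map Subtype.val := fun ha => (hmem a ha).2 hab.symm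
    have hb : b ∉ s.map Subtype.val := fun hb => (hmem b hb).1 hab
    exact List.nodup_cons.mpr ⟨by simpa [hab.ne] using ha,
      List.nodup_cons.mpr ⟨hb, hs.1.1.map Subtype.val_injective⟩⟩
  · obtain ⟨w, hiw, hw⟩ := hs.exists_adj_forall_not_adj i (by simpa using h)
    refine ⟨w, by simpa using hiw, fun u hu huw => ?_⟩
    simp only [List.cons_append, List.nil_append, List.mem_cons, ← List.map_take,
      List.mem_map] at hu
    rcases hu with rfl | rfl | ⟨u, hu, rfl⟩
    exacts [w.2.1 huw, w.2.2 huw, hw u hu huw]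
  · by_cases hva : G.Adj a v
    · exact ⟨a, by simp, hva.symm⟩
    by_cases hvb : G.Adj b v
    · exact ⟨b, by simp, hvb.symm⟩
    obtain ⟨t, ht, hvt⟩ := hs.2 ⟨v, hva, hvb⟩
    exact ⟨t, List.mem_cons_of_mem _ (List.mem_cons_of_mem _ (List.mem_map_of_mem ht)), hvt⟩

theorem TotalKUniform.length_eq [Finite V] {k : ℕ} (hG : TotalKUniform G k) {s : List V}
    (hs : TotalDomSeq G s) : s.length = k := by
  have hbdd : BddAbove {n | ∃ s : List V, TotalDomSeq G s ∧ s.length = n} :=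
    ⟨Nat.card V, by rintro _ ⟨t, ht, rfl⟩; exact ht.1.1.length_le_natCard⟩
  have hγt : totalDomNum G ≤ s.length := Nat.sInf_le ⟨_, hs.2, hs.1.1.ncard_setOf_mem⟩
  have hγgr : s.length ≤ grundyTotalDomNum G := le_csSup hbdd ⟨s, hs, rfl⟩
  rw [hG.1] at hγt
  rw [hG.2] at hγgr
  omega

theorem NoIsolatedVerts.even_of_forall_totalDomSeq_length_eq [Finite V]
    (hiso : NoIsolatedVerts G) {k : ℕ} (hk : ∀ s, TotalDomSeq G s → s.length = k) : Even k := by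
  induction k using Nat.strong_induction_on generalizing V with
  | _ k ih =>
  cases isEmpty_or_nonempty V with
  | inl => exact hk [] totalDomSeq_nil ▸ Even.zero
  | inr hV =>
  obtain ⟨a⟩ := hV
  obtain ⟨b, hab⟩ := hiso a
  obtain ⟨t, ht⟩ := (legalSeq_pair hab).exists_totalDomSeq_append hiso
  have hkt : t.length + 2 = k := by simpa using hk _ ht
  by_cases hR : NoIsolatedVerts (G.induce {v | ¬ G.Adj a v ∧ ¬ G.Adj b v})
  · have hR_even : Even (k - 2) := ih (k - 2) (by omega) hR fun s hs => by
      have := hk _ (hs.cons_cons_map_induce hab)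
      simp only [List.length_cons, List.length_map] at this
      omega
    obtain ⟨m, hm⟩ := hR_even
    exact ⟨m + 1, by omega⟩
  · simp only [NoIsolatedVerts, not_forall, not_exists] at hR
    obtain ⟨⟨r, hra, hrb⟩, hr⟩ := hR
    have hrt : TotalDomSeq G (r :: [a, b] ++ t) :=
      ⟨ht.1.cons_append_of_forall_adj (by simp) (legalSeq_cons_pair hab hra hrb) fun w hrw => by
        by_contra! hw
        exact hr ⟨w, hw a (by simp), hw b (by simp)⟩ hrw,
       ht.2.mono fun v hv => List.mem_cons_of_mem r hv⟩
    have := hk _ hrt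
    simp only [List.cons_append, List.nil_append, List.length_cons] at this
    omega

end

/-- There is no total `k`-uniform graph when `k` is odd: no finite simple graph without
isolated vertices satisfies `γ_t(G) = γ_gr^t(G) = k` for odd `k`. -/
theorem stmt_2 {V : Type*} [Finite V] (G : SimpleGraph V) (k : ℕ) (hk : Odd k)
    (hiso : NoIsolatedVerts G) : ¬ TotalKUniform G k :=
  fun hG => Nat.not_even_iff_odd.mpr hk
    (hiso.even_of_forall_totalDomSeq_length_eq fun _ hs => hG.length_eq hs)
end

section
/- Let G be a connected, non-bipartite, total k-uniform graph. Then the direct product G × K₂ (the bipartite double cover of G) is a connected total 2k-uniform graph. -/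
open SimpleGraph

/-- The direct (tensor) product of graphs: `(g,h)` is adjacent to `(g',h')` iff
`gg' ∈ E(G)` and `hh' ∈ E(H)`. In particular `directProd G (⊤ : SimpleGraph (Fin 2))` is the
bipartite double cover `G × K₂` of `G`. -/
def directProd {V W : Type*} (G : SimpleGraph V) (H : SimpleGraph W) :
    SimpleGraph (V × W) where
  Adj a b := G.Adj a.1 b.1 ∧ H.Adj a.2 b.2
  symm := ⟨fun a b h => ⟨h.1.symm, h.2.symm⟩⟩
  loopless := ⟨fun a h => G.loopless.irrefl a.1 h.1⟩

/-- `G` is bipartite: the vertices can be split into two parts so that every edge joins the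
two parts. -/
def IsBipartite {V : Type*} (G : SimpleGraph V) : Prop :=
  ∃ A : Set V, ∀ ⦃u v : V⦄, G.Adj u v → (u ∈ A ↔ v ∉ A)

/-!
The double cover behaves like two disjoint copies of `G` for both parameters. A total
dominating set of `G × K₂` meets each sheet `V × {c}` in a total dominating set of `G`, while
`A × K₂` is total dominating whenever `A` is; hence `γ_t(G × K₂) = 2 γ_t(G)`. A legal sequence
of `G × K₂` splits into one legal sequence of `G` per sheet, and each has length at most
`γ_gr^t(G)` because legal sequences extend greedily to total dominating sequences; conversely a
total dominating sequence `σ` of `G` gives the total dominating sequence `σ × {0}, σ × {1}` of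
the cover. Hence `γ_gr^t(G × K₂) = 2 γ_gr^t(G)`.
-/

section

variable {V : Type*} {G : SimpleGraph V}

theorem legalSeq_append_singleton_iff {s : List V} {a : V} :
    LegalSeq G (s ++ [a]) ↔
      LegalSeq G s ∧ a ∉ s ∧ (s ≠ [] → ∃ w, G.Adj a w ∧ ∀ u ∈ s, ¬ G.Adj u w) := by
  constructor
  · rintro ⟨hnd, hlegal⟩
    refine ⟨⟨hnd.of_append_left, fun i hi hi0 => ?_⟩, ?_, fun hs => ?_⟩
    · obtain ⟨w, haw, hw⟩ := hlegal i (by simp; omega) hi0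
      refine ⟨w, by simpa [List.getElem_append_left hi] using haw, ?_⟩
      rwa [List.take_append_of_le_length hi.le] at hw
    · exact fun ha => List.disjoint_of_nodup_append hnd ha (List.mem_singleton_self a)
    · obtain ⟨w, haw, hw⟩ := hlegal s.length (by simp) (List.length_pos_iff.mpr hs)
      exact ⟨w, by simpa using haw, by simpa using hw⟩
  · rintro ⟨⟨hnd, hlegal⟩, ha, hlast⟩
    refine ⟨hnd.append (List.nodup_singleton a) (by simpa using ha), fun i hi hi0 => ?_⟩
    rcases (show i < s.length ∨ i = s.length by simp at hi; omega) with hi' | rfl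
    · obtain ⟨w, haw, hw⟩ := hlegal i hi' hi0
      refine ⟨w, by simpa [List.getElem_append_left hi'] using haw, ?_⟩
      rwa [List.take_append_of_le_length hi'.le]
    · obtain ⟨w, haw, hw⟩ := hlast (List.ne_nil_of_length_pos hi0)
      exact ⟨w, by simpa using haw, by simpa using hw⟩

/-- `LegalSeq` as an inductive predicate: a legal sequence grows by appending a new vertex `a`
together with a neighbour `w` of `a` that no earlier vertex dominates. -/
inductive LegalSnoc (G : SimpleGraph V) : List V → Prop
  | nil : LegalSnoc G []
  | singleton (a : V) : LegalSnoc G [a]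
  | snoc {s : List V} {a w : V} : LegalSnoc G s → a ∉ s → G.Adj a w →
      (∀ u ∈ s, ¬ G.Adj u w) → LegalSnoc G (s ++ [a])

theorem LegalSnoc.legalSeq {s : List V} (h : LegalSnoc G s) : LegalSeq G s := by
  induction h with
  | nil => exact ⟨List.nodup_nil, fun i hi => absurd hi (by simp)⟩
  | singleton a => exact ⟨List.nodup_singleton a, fun i hi hi0 => by simp at hi; omega⟩
  | snoc _ ha haw hw ih => exact legalSeq_append_singleton_iff.mpr ⟨ih, ha, fun _ => ⟨_, haw, hw⟩⟩

theorem LegalSeq.legalSnoc {s : List V} (h : LegalSeq G s) : LegalSnoc G s := by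
  induction s using List.reverseRecOn with
  | nil => exact .nil
  | append_singleton s a ih =>
    obtain ⟨hs, ha, hlast⟩ := legalSeq_append_singleton_iff.mp h
    rcases eq_or_ne s [] with rfl | hne
    · exact .singleton a
    · obtain ⟨w, haw, hw⟩ := hlast hne
      exact .snoc (ih hs) ha haw hw

theorem LegalSnoc.nodup {s : List V} (h : LegalSnoc G s) : s.Nodup :=
  h.legalSeq.1

theorem totalDomNum_le {A : Set V} (hA : TotalDomSet G A) : totalDomNum G ≤ A.ncard :=
  Nat.sInf_le ⟨A, hA, rfl⟩

theorem exists_totalDomSet_ncard_eq_totalDomNum (hiso : NoIsolatedVerts G) :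
    ∃ A : Set V, TotalDomSet G A ∧ A.ncard = totalDomNum G :=
  Nat.sInf_mem (s := {n | ∃ A : Set V, TotalDomSet G A ∧ A.ncard = n})
    ⟨_, Set.univ, fun v => (hiso v).imp fun _ hw => ⟨trivial, hw⟩, rfl⟩

theorem bddAbove_totalDomSeq_lengths [Finite V] :
    BddAbove {n | ∃ s : List V, TotalDomSeq G s ∧ s.length = n} := by
  have := Fintype.ofFinite V
  refine ⟨Fintype.card V, ?_⟩
  rintro _ ⟨s, hs, rfl⟩
  exact hs.1.1.length_le_card

theorem TotalDomSeq.length_le_grundyTotalDomNum [Finite V] {s : List V}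
    (hs : TotalDomSeq G s) : s.length ≤ grundyTotalDomNum G :=
  le_csSup bddAbove_totalDomSeq_lengths ⟨s, hs, rfl⟩

/-- Greedy completion: while some vertex `v` is undominated, append a neighbour of `v`,
which then has `v` as a private neighbour. -/
theorem LegalSnoc.exists_totalDomSeq [Finite V] (hiso : NoIsolatedVerts G) {s : List V}
    (hs : LegalSnoc G s) : ∃ t, TotalDomSeq G t ∧ s.length ≤ t.length := by
  have := Fintype.ofFinite V
  by_cases hdom : TotalDomSet G {v | v ∈ s}
  · exact ⟨s, ⟨hs.legalSeq, hdom⟩, le_rfl⟩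
  obtain ⟨v, hv⟩ : ∃ v, ∀ a ∈ s, ¬ G.Adj v a := by simpa [TotalDomSet] using hdom
  obtain ⟨a, hva⟩ := hiso v
  have hsa : LegalSnoc G (s ++ [a]) :=
    .snoc hs (fun ha => hv a ha hva) hva.symm fun u hu huv => hv u hu huv.symm
  have hlen : (s ++ [a]).length ≤ Nat.card V :=
    Nat.card_eq_fintype_card (α := V) ▸ hsa.nodup.length_le_card
  obtain ⟨t, ht, hst⟩ := hsa.exists_totalDomSeq hiso
  exact ⟨t, ht, by simp at hst; omega⟩
termination_by Nat.card V - s.length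
decreasing_by simp only [List.length_append, List.length_singleton] at hlen ⊢; omega

theorem LegalSnoc.length_le_grundyTotalDomNum [Finite V] (hiso : NoIsolatedVerts G)
    {s : List V} (hs : LegalSnoc G s) : s.length ≤ grundyTotalDomNum G := by
  obtain ⟨t, ht, hst⟩ := hs.exists_totalDomSeq hiso
  exact hst.trans ht.length_le_grundyTotalDomNum

theorem exists_totalDomSeq_length_eq_grundyTotalDomNum [Finite V] (hiso : NoIsolatedVerts G) :
    ∃ s : List V, TotalDomSeq G s ∧ s.length = grundyTotalDomNum G := by
  obtain ⟨t, ht, -⟩ := LegalSnoc.nil.exists_totalDomSeq hiso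
  exact Nat.sSup_mem (s := {n | ∃ s : List V, TotalDomSeq G s ∧ s.length = n})
    ⟨_, t, ht, rfl⟩ bddAbove_totalDomSeq_lengths

/-- The vertices `v'` and `v''` of `G × K₂` are `(v, 0)` and `(v, 1)`. -/
abbrev SimpleGraph.doubleCover (G : SimpleGraph V) : SimpleGraph (V × Fin 2) :=
  directProd G ⊤

@[simp]
theorem doubleCover_adj {p q : V × Fin 2} :
    G.doubleCover.Adj p q ↔ G.Adj p.1 q.1 ∧ p.2 ≠ q.2 := by
  simp [directProd]

theorem NoIsolatedVerts.doubleCover (hiso : NoIsolatedVerts G) :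
    NoIsolatedVerts G.doubleCover := by
  rintro ⟨v, c⟩
  obtain ⟨w, hvw⟩ := hiso v
  exact ⟨(w, c + 1), by simp [hvw]⟩

theorem TotalDomSet.prod_univ {A : Set V} (hA : TotalDomSet G A) :
    TotalDomSet G.doubleCover (A ×ˢ Set.univ) := by
  rintro ⟨v, c⟩
  obtain ⟨a, ha, hva⟩ := hA v
  exact ⟨(a, c + 1), ⟨ha, trivial⟩, by simp [hva]⟩

theorem TotalDomSet.fiber {B : Set (V × Fin 2)} (hB : TotalDomSet G.doubleCover B)
    (c : Fin 2) : TotalDomSet G {v | (v, c) ∈ B} := by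
  intro v
  obtain ⟨⟨a, d⟩, haB, hva, hcd⟩ := hB (v, c + 1)
  obtain rfl : d = c := by change c + 1 ≠ d at hcd; omega
  exact ⟨a, haB, hva⟩

theorem ncard_eq_ncard_fiber_add [Finite V] (B : Set (V × Fin 2)) :
    B.ncard = {v | (v, 0) ∈ B}.ncard + {v | (v, 1) ∈ B}.ncard := by
  have hB : B = (·, 0) '' {v | (v, 0) ∈ B} ∪ (·, 1) '' {v | (v, 1) ∈ B} := by
    ext ⟨v, c⟩
    fin_cases c <;> simp
  nth_rewrite 1 [hB]
  rw [Set.ncard_union_eq (by simp [Set.disjoint_left]),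
    Set.ncard_image_of_injective _ (Prod.mk_left_injective 0),
    Set.ncard_image_of_injective _ (Prod.mk_left_injective 1)]

theorem totalDomNum_doubleCover [Finite V] (hiso : NoIsolatedVerts G) :
    totalDomNum G.doubleCover = 2 * totalDomNum G := by
  obtain ⟨A, hA, hAcard⟩ := exists_totalDomSet_ncard_eq_totalDomNum hiso
  obtain ⟨B, hB, hBcard⟩ := exists_totalDomSet_ncard_eq_totalDomNum hiso.doubleCover
  apply le_antisymm
  · calc totalDomNum G.doubleCover ≤ (A ×ˢ (Set.univ : Set (Fin 2))).ncard :=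
          totalDomNum_le hA.prod_univ
      _ = 2 * totalDomNum G := by simp [Set.ncard_prod, hAcard, mul_comm]
  · have h0 := totalDomNum_le (hB.fiber 0)
    have h1 := totalDomNum_le (hB.fiber 1)
    rw [← hBcard, ncard_eq_ncard_fiber_add]
    omega

def sheet (c : Fin 2) (s : List (V × Fin 2)) : List V :=
  (s.filter (·.2 = c)).map Prod.fst

theorem length_eq_length_sheet_add (s : List (V × Fin 2)) :
    s.length = (sheet 0 s).length + (sheet 1 s).length := by
  rw [s.length_eq_length_filter_add (·.2 = 0), sheet, sheet, List.length_map, List.length_map]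
  congr 2
  exact List.filter_congr fun ⟨_, c⟩ _ => by fin_cases c <;> rfl

@[simp]
theorem mem_sheet {c : Fin 2} {s : List (V × Fin 2)} {v : V} : v ∈ sheet c s ↔ (v, c) ∈ s := by
  simp [sheet]

theorem sheet_append_singleton (c : Fin 2) (s : List (V × Fin 2)) (a : V × Fin 2) :
    sheet c (s ++ [a]) = if a.2 = c then sheet c s ++ [a.1] else sheet c s := by
  split_ifs <;> simp [sheet, *]

theorem LegalSnoc.sheet {s : List (V × Fin 2)} (hs : LegalSnoc G.doubleCover s)
    (c : Fin 2) : LegalSnoc G (sheet c s) := by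
  induction hs with
  | nil => exact .nil
  | singleton a =>
    by_cases h : a.2 = c <;> simp [_root_.sheet, h, LegalSnoc.nil, LegalSnoc.singleton]
  | @snoc t a w _ ha haw hw ih =>
    rw [sheet_append_singleton]
    split_ifs with h
    · obtain ⟨hadj, hne⟩ := doubleCover_adj.mp haw
      refine .snoc ih (fun h' => ha ?_) hadj fun u hu huw => hw _ (mem_sheet.mp hu) ?_
      · rwa [mem_sheet, ← h] at h'
      · exact doubleCover_adj.mpr ⟨huw, h ▸ hne⟩
    · exact ih

theorem LegalSnoc.append_map_sheet (hiso : NoIsolatedVerts G) {r : List (V × Fin 2)}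
    (hr : LegalSnoc G.doubleCover r) {c : Fin 2} (hrc : ∀ p ∈ r, p.2 ≠ c) {s : List V}
    (hs : LegalSnoc G s) : LegalSnoc G.doubleCover (r ++ s.map (·, c)) := by
  have hr_off : ∀ p ∈ r, ∀ w : V, ¬ G.doubleCover.Adj p (w, c + 1) := fun p hp w hpw => by
    have := hrc p hp
    have := (doubleCover_adj.mp hpw).2
    dsimp only at this
    omega
  induction hs with
  | nil => simpa using hr
  | singleton a =>
    obtain ⟨w, haw⟩ := hiso a
    exact .snoc hr (fun ha => hrc _ ha rfl) (w := (w, c + 1)) (by simp [haw])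
      fun p hp => hr_off p hp w
  | @snoc t a w _ ha haw hw ih =>
    rw [List.map_append, List.map_singleton, ← List.append_assoc]
    refine .snoc ih (w := (w, c + 1)) ?_ (by simp [haw]) ?_
    · simpa [ha] using fun h => hrc _ h rfl
    · simp only [List.mem_append, List.mem_map]
      rintro p (hp | ⟨v, hv, rfl⟩)
      · exact hr_off p hp w
      · simpa using hw v hv

theorem TotalDomSeq.doubleCover (hiso : NoIsolatedVerts G) {s : List V}
    (hs : TotalDomSeq G s) : TotalDomSeq G.doubleCover (s.map (·, 0) ++ s.map (·, 1)) := by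
  have hsL := hs.1.legalSnoc
  have h0 : LegalSnoc G.doubleCover (s.map (·, 0)) := by
    simpa using LegalSnoc.nil.append_map_sheet hiso (c := 0) (by simp) hsL
  refine ⟨(h0.append_map_sheet hiso (by simp) hsL).legalSeq, ?_⟩
  rintro ⟨v, c⟩
  obtain ⟨a, ha, hva⟩ := hs.2 v
  refine ⟨(a, c + 1), ?_, by simp [hva]⟩
  fin_cases c <;> simpa using ha

theorem grundyTotalDomNum_doubleCover [Finite V] (hiso : NoIsolatedVerts G) :
    grundyTotalDomNum G.doubleCover = 2 * grundyTotalDomNum G := by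
  obtain ⟨σ, hσ, hσlen⟩ := exists_totalDomSeq_length_eq_grundyTotalDomNum hiso
  obtain ⟨s, hs, hslen⟩ := exists_totalDomSeq_length_eq_grundyTotalDomNum hiso.doubleCover
  apply le_antisymm
  · have h0 := (hs.1.legalSnoc.sheet 0).length_le_grundyTotalDomNum hiso
    have h1 := (hs.1.legalSnoc.sheet 1).length_le_grundyTotalDomNum hiso
    rw [← hslen, length_eq_length_sheet_add]
    omega
  · simpa [hσlen, two_mul] using (hσ.doubleCover hiso).length_le_grundyTotalDomNum

theorem SimpleGraph.Reachable.induction_on_adj {P : V → Prop} {u v : V} (h : G.Reachable u v)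
    (hu : P u) (hstep : ∀ ⦃a b⦄, G.Adj a b → P a → P b) : P v := by
  rw [reachable_iff_reflTransGen] at h
  induction h with
  | refl => exact hu
  | tail _ hab ih => exact hstep hab ih

/-- If `G` is connected, some lift of each vertex lies in the component of `(r, 0)`. The
bipartition `{v | (v, 0) ~ (r, 0)}` of `G` fails at some edge, which yields a vertex with both
lifts in that component; this property then spreads along the edges of `G`. -/
theorem doubleCover_connected (hconn : G.Connected) (hnb : ¬ _root_.IsBipartite G) :
    G.doubleCover.Connected := by
  obtain ⟨r⟩ := hconn.nonempty
  let R := G.doubleCover.Reachable (r, 0)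
  have hstep : ∀ ⦃u w : V⦄ ⦃c d : Fin 2⦄, G.Adj u w → c ≠ d → R (u, c) → R (w, d) :=
    fun _ _ _ _ huw hcd hu => hu.trans (Adj.reachable (by simp [huw, hcd]))
  have hlift : ∀ v, R (v, 0) ∨ R (v, 1) := fun v =>
    (hconn.preconnected r v).induction_on_adj (P := fun v => R (v, 0) ∨ R (v, 1)) (.inl .rfl)
      fun _ _ huw hu => (hu.imp (hstep huw (by decide)) (hstep huw (by decide))).symm
  obtain ⟨v, hv⟩ : ∃ v, R (v, 0) ∧ R (v, 1) := by
    by_contra! hnone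
    refine hnb ⟨{v | R (v, 0)}, fun u w huw => ⟨fun hu hw => ?_, fun hw => ?_⟩⟩
    · exact hnone w hw (hstep huw (by decide) hu)
    · exact hstep huw.symm (by decide) ((hlift w).resolve_left hw)
  have hall : ∀ w, R (w, 0) ∧ R (w, 1) := fun w =>
    (hconn.preconnected v w).induction_on_adj (P := fun w => R (w, 0) ∧ R (w, 1)) hv
      fun _ _ huw hu => ⟨hstep huw (by decide) hu.2, hstep huw (by decide) hu.1⟩
  have hR : ∀ p, R p := fun ⟨w, c⟩ => by fin_cases c; exacts [(hall w).1, (hall w).2]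
  exact @Connected.mk _ _ (fun p q => (hR p).symm.trans (hR q)) ⟨(r, 0)⟩

end

/-- If `G` is a connected, non-bipartite, total `k`-uniform graph, then its bipartite double
cover `G × K₂` is a connected total `2k`-uniform graph. -/
theorem stmt_11 {V : Type*} [Finite V] (G : SimpleGraph V) (k : ℕ)
    (hiso : NoIsolatedVerts G) (hconn : G.Connected) (hnb : ¬ _root_.IsBipartite G)
    (huni : TotalKUniform G k) :
    (directProd G (⊤ : SimpleGraph (Fin 2))).Connected ∧
    TotalKUniform (directProd G (⊤ : SimpleGraph (Fin 2))) (2 * k) := by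
  refine ⟨doubleCover_connected hconn hnb, ?_, ?_⟩
  · rw [← huni.1, totalDomNum_doubleCover hiso]
  · rw [← huni.2, grundyTotalDomNum_doubleCover hiso]
end
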